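/- arXiv:2604.05441 — 2 statements merged into one kernel-verified Lean document; each statement's English description precedes it below -/
import Mathlib

section
/- Let 0 ≤ μ < 2, x₀ < ℓ, and α(x) = (x − x₀)^μ on [x₀,ℓ]. Then for every complex-valued u ∈ V²_α(x₀,ℓ), the function x ↦ (α u')'(x)·(x − x₀)·conj(u'(x)) is integrable on (x₀,ℓ) and 2·Re ∫_{x₀}^{ℓ} (α u')'(x)·(x − x₀)·conj(u'(x)) dx = (ℓ − x₀)^{1+μ}·|u'(ℓ)|² − (1 − μ)·∫_{x₀}^{ℓ} α(x)|u'(x)|² dx, where u'(ℓ) denotes the limit of u' at ℓ (which exists since α u' ∈ H¹ and α(ℓ) > 0). -/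
open MeasureTheory Set Filter Topology

/-- `u ∈ V¹_α(x₀, ℓ)` (complex-valued): `u ∈ L²(x₀, ℓ)`, `u` is locally absolutely
continuous on `(x₀, ℓ]` with a.e. derivative `u'` (expressed via the fundamental theorem of
calculus on compact subintervals of `(x₀, ℓ]`), and `√α · u' ∈ L²(x₀, ℓ)`. -/
def MemV1C (x₀ ℓ : ℝ) (α : ℝ → ℝ) (u u' : ℝ → ℂ) : Prop :=
  MemLp u 2 (volume.restrict (Ioo x₀ ℓ)) ∧
  (∀ x y : ℝ, x₀ < x → x ≤ y → y ≤ ℓ →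
    IntervalIntegrable u' volume x y ∧ u y - u x = ∫ t in x..y, u' t) ∧
  MemLp (fun x => Real.sqrt (α x) • u' x) 2 (volume.restrict (Ioo x₀ ℓ))

/-- `u ∈ V²_α(x₀, ℓ)` (complex-valued): `u ∈ V¹_α(x₀, ℓ)` and `α·u' ∈ H¹(x₀, ℓ)`, i.e.
`α·u' ∈ L²`, it is absolutely continuous with a.e. derivative `g' = (α u')' ∈ L²`. -/
def MemV2C (x₀ ℓ : ℝ) (α : ℝ → ℝ) (u u' g' : ℝ → ℂ) : Prop :=
  MemV1C x₀ ℓ α u u' ∧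
  MemLp (fun x => α x • u' x) 2 (volume.restrict (Ioo x₀ ℓ)) ∧
  MemLp g' 2 (volume.restrict (Ioo x₀ ℓ)) ∧
  ∀ x y : ℝ, x₀ < x → x ≤ y → y ≤ ℓ →
    IntervalIntegrable g' volume x y ∧ α y • u' y - α x • u' x = ∫ t in x..y, g' t

/-!
With `G = α u'` and the weight `w(x) = (x - x₀)^(1 - μ)`, the function
`w |G|² = (x - x₀)^(1 + μ) |u'|²` is absolutely continuous on every `[a, ℓ]` with `x₀ < a`, with
derivative `(1 - μ) α |u'|² + 2 Re ((α u')' (x - x₀) conj u')`. Integrating over `[a, ℓ]` gives the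
identity up to the boundary term `(a - x₀)^(1 + μ) |u'(a)|² = (a - x₀) · α(a) |u'(a)|²`, which
therefore converges as `a → x₀⁺`; its limit is `0`, since otherwise `α |u'|² ≳ (x - x₀)⁻¹` near
`x₀`, contradicting the integrability of `α |u'|²`. The multiplier term is integrable because it
equals `(x - x₀)^(1 - μ/2) · (α u')' · conj (√α u')`, a bounded factor (`μ ≤ 2`) times a product of
two `L²` functions.
-/

open ComplexConjugate

section Primitive

variable {E : Type*} [NormedAddCommGroup E] [NormedSpace ℝ E] {a b : ℝ}

def IsPrimitiveOn (f F : ℝ → E) (a b : ℝ) : Prop :=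
  IntervalIntegrable F volume a b ∧ ∀ x ∈ Icc a b, f x - f a = ∫ t in a..x, F t

theorem IsPrimitiveOn.continuousOn {f F : ℝ → E} (hf : IsPrimitiveOn f F a b) :
    ContinuousOn f (Icc a b) :=
  (continuousOn_const.add
    ((intervalIntegral.continuousOn_primitive_interval' hf.1 left_mem_uIcc).mono
      Icc_subset_uIcc)).congr fun x hx => eq_add_of_sub_eq' (hf.2 x hx)

theorem isPrimitiveOn_of_hasDerivAt [CompleteSpace E] {f F : ℝ → E} (hab : a ≤ b)
    (hf : ∀ x ∈ Icc a b, HasDerivAt f (F x) x) (hF : ContinuousOn F (Icc a b)) :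
    IsPrimitiveOn f F a b := by
  refine ⟨(hF.mono (uIcc_of_le hab).subset).intervalIntegrable, fun x hx => ?_⟩
  have hsub : uIcc a x ⊆ Icc a b := uIcc_of_le hx.1 ▸ Icc_subset_Icc_right hx.2
  exact (intervalIntegral.integral_eq_sub_of_hasDerivAt (fun t ht => hf t (hsub ht))
    ((hF.mono hsub).intervalIntegrable)).symm

variable {𝕜 : Type*} [RCLike 𝕜] {f h F H : ℝ → 𝕜}

theorem IntervalIntegrable.conj {ν : Measure ℝ}
    (hf : IntervalIntegrable f ν a b) : IntervalIntegrable (fun x => conj (f x)) ν a b :=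
  have hconj {ρ : Measure ℝ} (h : Integrable f ρ) : Integrable (fun x => conj (f x)) ρ :=
    RCLike.conjCLE.toContinuousLinearMap.integrable_comp h
  ⟨hconj hf.1, hconj hf.2⟩

theorem IsPrimitiveOn.conj (hf : IsPrimitiveOn f F a b) :
    IsPrimitiveOn (fun x => conj (f x)) (fun x => conj (F x)) a b := by
  refine ⟨hf.1.conj, fun x hx => ?_⟩
  rw [intervalIntegral.intervalIntegral_conj, ← hf.2 x hx, map_sub]

/-- Fubini on the square `[a, b]²`, cut along the diagonal into two triangles. -/
theorem integral_mul_primitive_add_primitive_mul (hab : a ≤ b)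
    (hF : IntervalIntegrable F volume a b) (hH : IntervalIntegrable H volume a b) :
    (∫ x in a..b, F x * ∫ t in a..x, H t) + ∫ x in a..b, (∫ t in a..x, F t) * H x =
      (∫ x in a..b, F x) * ∫ x in a..b, H x := by
  rw [intervalIntegrable_iff_integrableOn_Ioc_of_le hab] at hF hH
  simp only [intervalIntegral.integral_of_le hab]
  set ν := volume.restrict (Ioc a b)
  set K : ℝ × ℝ → 𝕜 := fun p => F p.1 * H p.2
  have hK : Integrable K (ν.prod ν) := hF.mul_prod hH
  have hs : MeasurableSet {p : ℝ × ℝ | p.2 < p.1} := measurableSet_lt measurable_snd measurable_fst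
  have lower : ∫ p in {p : ℝ × ℝ | p.2 < p.1}, K p ∂ν.prod ν =
      ∫ x in Ioc a b, F x * ∫ t in a..x, H t := by
    rw [← integral_indicator hs, integral_prod _ (hK.indicator hs)]
    refine setIntegral_congr_fun measurableSet_Ioc fun x hx => ?_
    have hsec : (fun y => {p : ℝ × ℝ | p.2 < p.1}.indicator K (x, y)) =
        (Iio x).indicator fun y => F x * H y := by
      ext y; by_cases hy : y < x <;> simp [hy, K]
    have hset : Iio x ∩ Ioc a b = Ioo a x := by
      ext y; simp only [mem_inter_iff, mem_Iio, mem_Ioc, mem_Ioo]; grind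
    simp only [hsec, integral_indicator measurableSet_Iio, ν, Measure.restrict_restrict
      measurableSet_Iio, hset, integral_const_mul, intervalIntegral.integral_of_le hx.1.le,
      integral_Ioc_eq_integral_Ioo]
  have upper : ∫ p in {p : ℝ × ℝ | p.2 < p.1}ᶜ, K p ∂ν.prod ν =
      ∫ y in Ioc a b, (∫ t in a..y, F t) * H y := by
    rw [← integral_indicator hs.compl, integral_prod_symm _ (hK.indicator hs.compl)]
    refine setIntegral_congr_fun measurableSet_Ioc fun y hy => ?_
    have hsec : (fun x => {p : ℝ × ℝ | p.2 < p.1}ᶜ.indicator K (x, y)) =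
        (Iic y).indicator fun x => F x * H y := by
      ext x; by_cases hx : x ≤ y <;> simp [hx, K]
    simp only [hsec, integral_indicator measurableSet_Iic, ν, Measure.restrict_restrict
      measurableSet_Iic, Iic_inter_Ioc_of_le hy.2, integral_mul_const,
      intervalIntegral.integral_of_le hy.1.le]
  rw [← lower, ← upper, integral_add_compl hs hK, integral_prod_mul]

theorem IsPrimitiveOn.mul (hab : a ≤ b) (hf : IsPrimitiveOn f F a b)
    (hh : IsPrimitiveOn h H a b) :
    IsPrimitiveOn (fun x => f x * h x) (fun x => F x * h x + f x * H x) a b := by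
  have hIcc := uIcc_of_le hab
  refine ⟨(hf.1.mul_continuousOn (hIcc ▸ hh.continuousOn)).add
    (hh.1.continuousOn_mul (hIcc ▸ hf.continuousOn)), fun x hx => ?_⟩
  have hsub : uIcc a x ⊆ Icc a b := uIcc_of_le hx.1 ▸ Icc_subset_Icc_right hx.2
  have hF := hf.1.mono_set (hIcc ▸ hsub)
  have hH := hh.1.mono_set (hIcc ▸ hsub)
  have hΦ := intervalIntegral.continuousOn_primitive_interval' hF left_mem_uIcc
  have hΨ := intervalIntegral.continuousOn_primitive_interval' hH left_mem_uIcc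
  have hsplit : EqOn (fun t => F t * h t + f t * H t) (fun t => (F t * h a + f a * H t) +
      (F t * (∫ s in a..t, H s) + (∫ s in a..t, F s) * H t)) (uIcc a x) := fun t ht => by
    simp only [← hf.2 t (hsub ht), ← hh.2 t (hsub ht)]; ring
  rw [intervalIntegral.integral_congr hsplit,
    intervalIntegral.integral_add ((hF.mul_const _).add (hH.const_mul _))
      ((hF.mul_continuousOn hΨ).add (hH.continuousOn_mul hΦ)),
    intervalIntegral.integral_add (hF.mul_const _) (hH.const_mul _),
    intervalIntegral.integral_add (hF.mul_continuousOn hΨ) (hH.continuousOn_mul hΦ),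
    integral_mul_primitive_add_primitive_mul hx.1 hF hH, intervalIntegral.integral_mul_const,
    intervalIntegral.integral_const_mul, ← hf.2 x hx, ← hh.2 x hx]
  ring

end Primitive

theorem isPrimitiveOn_ofReal_rpow_sub {x₀ a b : ℝ} (p : ℝ) (hx₀ : x₀ < a) (hab : a ≤ b) :
    IsPrimitiveOn (fun x => (((x - x₀) ^ p : ℝ) : ℂ))
      (fun x => ((p * (x - x₀) ^ (p - 1) : ℝ) : ℂ)) a b := by
  have hpos : ∀ x ∈ Icc a b, x - x₀ ≠ 0 := fun x hx => (sub_pos.2 (hx₀.trans_le hx.1)).ne'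
  refine isPrimitiveOn_of_hasDerivAt hab (fun x hx => ?_) ?_
  · exact (((hasDerivAt_id x).sub_const x₀).rpow_const (Or.inl (hpos x hx))).ofReal_comp.congr_deriv
      (by simp)
  · exact Complex.continuous_ofReal.comp_continuousOn (continuousOn_const.mul
      ((continuousOn_id.sub continuousOn_const).rpow_const fun x hx => Or.inl (hpos x hx)))

section Weight

variable {t : ℝ} (μ : ℝ)

theorem ofReal_rpow_mul_smul_mul_conj_smul (ht : 0 < t) (u : ℂ) :
    ((t ^ (1 - μ) : ℝ) : ℂ) * ((t ^ μ • u) * conj (t ^ μ • u)) =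
      ((t ^ (1 + μ) * ‖u‖ ^ 2 : ℝ) : ℂ) := by
  have ht' : t ^ (1 - μ) * (t ^ μ * t ^ μ) = t ^ (1 + μ) := by
    rw [← Real.rpow_add ht, ← Real.rpow_add ht]; ring_nf
  simp only [Complex.real_smul, map_mul, Complex.conj_ofReal, ← ht', Complex.ofReal_mul,
    Complex.ofReal_pow]
  linear_combination ((t ^ (1 - μ) : ℝ) * ((t ^ μ : ℝ) : ℂ) ^ 2 : ℂ) * Complex.mul_conj' u

theorem ofReal_rpow_deriv_mul_smul_mul_conj_smul_add (ht : 0 < t) (u g : ℂ) :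
    (((1 - μ) * t ^ (1 - μ - 1) : ℝ) : ℂ) * ((t ^ μ • u) * conj (t ^ μ • u)) +
        ((t ^ (1 - μ) : ℝ) : ℂ) * (g * conj (t ^ μ • u) + (t ^ μ • u) * conj g) =
      (((1 - μ) * (t ^ μ * ‖u‖ ^ 2) : ℝ) : ℂ) +
        (g * (t : ℂ) * conj u + conj (g * (t : ℂ) * conj u)) := by
  have h1 : ((t ^ (1 - μ) : ℝ) : ℂ) * ((t ^ μ : ℝ) : ℂ) = t := by
    rw [← Complex.ofReal_mul, ← Real.rpow_add ht]; simp
  have h2 : ((t ^ (1 - μ - 1) : ℝ) : ℂ) * ((t ^ μ : ℝ) : ℂ) * ((t ^ μ : ℝ) : ℂ) =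
      ((t ^ μ : ℝ) : ℂ) := by
    rw [← Complex.ofReal_mul, ← Complex.ofReal_mul, ← Real.rpow_add ht, ← Real.rpow_add ht]
    ring_nf
  simp only [Complex.real_smul, map_mul, Complex.conj_ofReal, Complex.conj_conj,
    Complex.ofReal_mul, Complex.ofReal_pow]
  linear_combination ((1 - μ : ℝ) * u * conj u : ℂ) * h2 +
    ((1 - μ : ℝ) * (t ^ μ : ℝ) : ℂ) * Complex.mul_conj' u + (g * conj u + u * conj g) * h1

end Weight

theorem multiplier_identity_on_Icc {μ x₀ a ℓ : ℝ} {u' g' : ℝ → ℂ} (hx₀ : x₀ < a) (haℓ : a ≤ ℓ)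
    (hG : IsPrimitiveOn (fun x => ((x - x₀) ^ μ : ℝ) • u' x) g' a ℓ)
    (hS : IntervalIntegrable (fun x => (x - x₀) ^ μ * ‖u' x‖ ^ 2) volume a ℓ)
    (hf : IntervalIntegrable (fun x => g' x * ((x - x₀ : ℝ) : ℂ) * conj (u' x)) volume a ℓ) :
    (ℓ - x₀) ^ (1 + μ) * ‖u' ℓ‖ ^ 2 - (a - x₀) ^ (1 + μ) * ‖u' a‖ ^ 2 =
      (1 - μ) * (∫ x in a..ℓ, (x - x₀) ^ μ * ‖u' x‖ ^ 2) +
        2 * (∫ x in a..ℓ, g' x * ((x - x₀ : ℝ) : ℂ) * conj (u' x)).re := by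
  have hP := ((isPrimitiveOn_ofReal_rpow_sub (1 - μ) hx₀ haℓ).mul haℓ
    (hG.mul haℓ hG.conj)).2 ℓ ⟨haℓ, le_rfl⟩
  beta_reduce at hP
  have hmem : ∀ x ∈ uIcc a ℓ, 0 < x - x₀ := fun x hx =>
    sub_pos.2 (hx₀.trans_le (uIcc_of_le haℓ ▸ hx).1)
  have hSc := hS.const_mul (1 - μ)
  have hSℂ : IntervalIntegrable (fun x => (((1 - μ) * ((x - x₀) ^ μ * ‖u' x‖ ^ 2) : ℝ) : ℂ))
      volume a ℓ := ⟨hSc.1.ofReal, hSc.2.ofReal⟩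
  rw [ofReal_rpow_mul_smul_mul_conj_smul μ (sub_pos.2 (hx₀.trans_le haℓ)),
    ofReal_rpow_mul_smul_mul_conj_smul μ (sub_pos.2 hx₀),
    intervalIntegral.integral_congr fun x hx =>
      ofReal_rpow_deriv_mul_smul_mul_conj_smul_add μ (hmem x hx) (u' x) (g' x),
    intervalIntegral.integral_add hSℂ (hf.add hf.conj),
    intervalIntegral.integral_add hf hf.conj, intervalIntegral.intervalIntegral_conj,
    Complex.add_conj, intervalIntegral.integral_ofReal, intervalIntegral.integral_const_mul] at hP
  exact_mod_cast hP

theorem integrableOn_rpow_mul_norm_sq {μ x₀ ℓ : ℝ} {u' : ℝ → ℂ}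
    (hv : MemLp (fun x => √((x - x₀) ^ μ) • u' x) 2 (volume.restrict (Ioo x₀ ℓ))) :
    IntegrableOn (fun x => (x - x₀) ^ μ * ‖u' x‖ ^ 2) (Ioo x₀ ℓ) := by
  refine IntegrableOn.congr_fun hv.norm.integrable_sq (fun x hx => ?_) measurableSet_Ioo
  simp only [norm_smul, Real.norm_of_nonneg (Real.sqrt_nonneg _), mul_pow,
    Real.sq_sqrt (Real.rpow_nonneg (sub_pos.2 hx.1).le _)]

theorem integrableOn_mul_sub_mul_conj {μ x₀ ℓ : ℝ} (hμ : μ ≤ 2) {u' g' : ℝ → ℂ}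
    (hg' : MemLp g' 2 (volume.restrict (Ioo x₀ ℓ)))
    (hv : MemLp (fun x => √((x - x₀) ^ μ) • u' x) 2 (volume.restrict (Ioo x₀ ℓ))) :
    IntegrableOn (fun x => g' x * ((x - x₀ : ℝ) : ℂ) * conj (u' x)) (Ioo x₀ ℓ) := by
  have hgv : IntegrableOn (g' * star fun x => √((x - x₀) ^ μ) • u' x) (Ioo x₀ ℓ) :=
    hg'.integrable_mul hv.star
  refine IntegrableOn.congr_fun (hgv.bdd_mul (c := (ℓ - x₀) ^ (1 - μ / 2))
    (by fun_prop : Measurable fun x => (((x - x₀) ^ (1 - μ / 2) : ℝ) : ℂ)).aestronglyMeasurable ?_)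
    (fun x hx => ?_) measurableSet_Ioo
  · filter_upwards [ae_restrict_mem measurableSet_Ioo] with x hx
    rw [Complex.norm_real, Real.norm_of_nonneg (Real.rpow_nonneg (sub_pos.2 hx.1).le _)]
    exact Real.rpow_le_rpow (sub_pos.2 hx.1).le (by linarith [hx.2]) (by linarith)
  · have ht := sub_pos.2 hx.1
    have hsqrt : √((x - x₀) ^ μ) = (x - x₀) ^ (μ / 2) := by
      rw [Real.sqrt_eq_rpow, ← Real.rpow_mul ht.le]; ring_nf
    have hsplit : (((x - x₀) ^ (1 - μ / 2) : ℝ) : ℂ) * (((x - x₀) ^ (μ / 2) : ℝ) : ℂ) =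
        ((x - x₀ : ℝ) : ℂ) := by
      rw [← Complex.ofReal_mul, ← Real.rpow_add ht]; simp
    simp only [Pi.mul_apply, Pi.star_apply, hsqrt, Complex.star_def, Complex.real_smul, map_mul,
      Complex.conj_ofReal]
    linear_combination g' x * conj (u' x) * hsplit

theorem tendsto_intervalIntegral_nhdsGT {E : Type*} [NormedAddCommGroup E] [NormedSpace ℝ E]
    {f : ℝ → E} {a b : ℝ} (hab : a < b) (hf : IntegrableOn f (Ioo a b)) :
    Tendsto (fun x => ∫ t in x..b, f t) (𝓝[>] a) (𝓝 (∫ t in a..b, f t)) := by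
  rw [← integrableOn_Icc_iff_integrableOn_Ioo, ← uIcc_of_le hab.le] at hf
  have := (intervalIntegral.continuousOn_primitive_interval_left hf a left_mem_uIcc).mono
    (uIcc_of_le hab.le ▸ Ioo_subset_Icc_self)
  rwa [ContinuousWithinAt, nhdsWithin_Ioo_eq_nhdsGT hab] at this

theorem eq_zero_of_tendsto_sub_mul_of_integrableOn {S : ℝ → ℝ} {x₀ ℓ c : ℝ} (hxl : x₀ < ℓ)
    (hS : IntegrableOn S (Ioo x₀ ℓ)) (h : Tendsto (fun x => (x - x₀) * S x) (𝓝[>] x₀) (𝓝 c)) :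
    c = 0 := by
  by_contra hc
  have hc' : 0 < |c| := abs_pos.2 hc
  obtain ⟨m, hm, hsub⟩ := mem_nhdsGT_iff_exists_Ioo_subset.1
    ((h.abs.eventually (lt_mem_nhds (half_lt_self hc'))).and (Ioo_mem_nhdsGT hxl))
  have hinv : IntervalIntegrable (fun x => (x - x₀)⁻¹) volume x₀ m := by
    rw [intervalIntegrable_iff_integrableOn_Ioo_of_le hm.le]
    refine ((hS.mono_set fun x hx => (hsub hx).2).norm.const_mul (2 / |c|)).mono'
      (by fun_prop) ?_
    filter_upwards [ae_restrict_mem measurableSet_Ioo] with x hx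
    have ht := sub_pos.2 hx.1
    have hlow : |c| / 2 < (x - x₀) * ‖S x‖ := by
      simpa [abs_mul, abs_of_pos ht] using (hsub hx).1
    rw [Real.norm_of_nonneg (inv_nonneg.2 ht.le), div_mul_eq_mul_div, le_div_iff₀ hc',
      inv_mul_le_iff₀ ht]
    linarith
  simp [(mem_Ioi.1 hm).ne] at hinv

theorem multiplier_identity_general (μ x₀ ℓ : ℝ) (hμ2 : μ < 2) (hxl : x₀ < ℓ)
    (u u' g' : ℝ → ℂ) (hu : MemV2C x₀ ℓ (fun x => (x - x₀) ^ μ) u u' g') :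
    IntegrableOn (fun x => g' x * ((x - x₀ : ℝ) : ℂ) * (starRingEnd ℂ) (u' x))
        (Ioo x₀ ℓ) volume ∧
      2 * (∫ x in Ioo x₀ ℓ, g' x * ((x - x₀ : ℝ) : ℂ) * (starRingEnd ℂ) (u' x)).re =
        (ℓ - x₀) ^ (1 + μ) * ‖u' ℓ‖ ^ 2 -
          (1 - μ) * ∫ x in Ioo x₀ ℓ, (x - x₀) ^ μ * ‖u' x‖ ^ 2 := by
  obtain ⟨⟨-, -, hv⟩, -, hg', hG⟩ := hu
  set S := fun x => (x - x₀) ^ μ * ‖u' x‖ ^ 2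
  set f := fun x => g' x * ((x - x₀ : ℝ) : ℂ) * conj (u' x)
  have hf : IntegrableOn f (Ioo x₀ ℓ) := integrableOn_mul_sub_mul_conj hμ2.le hg' hv
  have hS : IntegrableOn S (Ioo x₀ ℓ) := integrableOn_rpow_mul_norm_sq hv
  refine ⟨hf, ?_⟩
  simp only [← integral_Ioc_eq_integral_Ioo, ← intervalIntegral.integral_of_le hxl.le]
  have hlim : Tendsto (fun a => (a - x₀) * S a) (𝓝[>] x₀) (𝓝 ((ℓ - x₀) ^ (1 + μ) * ‖u' ℓ‖ ^ 2 -
      (1 - μ) * (∫ x in x₀..ℓ, S x) - 2 * (∫ x in x₀..ℓ, f x).re)) := by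
    refine ((tendsto_const_nhds.sub ((tendsto_intervalIntegral_nhdsGT hxl hS).const_mul _)).sub
      (((Complex.continuous_re.tendsto _).comp
        (tendsto_intervalIntegral_nhdsGT hxl hf)).const_mul 2)).congr' ?_
    filter_upwards [Ioo_mem_nhdsGT hxl] with a ha
    have hsub : Ioo a ℓ ⊆ Ioo x₀ ℓ := Ioo_subset_Ioo_left ha.1.le
    have key := multiplier_identity_on_Icc ha.1 ha.2.le
      ⟨(hG a ℓ ha.1 ha.2.le le_rfl).1, fun x hx => (hG a x ha.1 hx.1 hx.2).2⟩
      ((intervalIntegrable_iff_integrableOn_Ioo_of_le ha.2.le).2 (hS.mono_set hsub))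
      ((intervalIntegrable_iff_integrableOn_Ioo_of_le ha.2.le).2 (hf.mono_set hsub))
    rw [Real.rpow_add (sub_pos.2 ha.1), Real.rpow_one] at key
    simp only [Function.comp_apply, S, f] at key ⊢
    linarith
  linarith [eq_zero_of_tendsto_sub_mul_of_integrableOn hxl hS hlim]

/-- Let `0 ≤ μ < 2`, `x₀ < ℓ`, and `α(x) = (x - x₀)^μ`. For every
complex-valued `u ∈ V²_α(x₀, ℓ)` (with `(α u')' = g'`), the function
`x ↦ (α u')'(x)·(x - x₀)·conj(u'(x))` is integrable on `(x₀, ℓ)` and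
`2·Re ∫_{x₀}^{ℓ} (α u')'(x)·(x - x₀)·conj(u'(x)) dx
  = (ℓ - x₀)^{1+μ}·|u'(ℓ)|² - (1 - μ)·∫_{x₀}^{ℓ} α(x)|u'(x)|² dx`. -/
theorem multiplier_identity (μ x₀ ℓ : ℝ) (hμ0 : 0 ≤ μ) (hμ2 : μ < 2) (hxl : x₀ < ℓ)
    (u u' g' : ℝ → ℂ) (hu : MemV2C x₀ ℓ (fun x => (x - x₀) ^ μ) u u' g') :
    IntegrableOn (fun x => g' x * ((x - x₀ : ℝ) : ℂ) * (starRingEnd ℂ) (u' x))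
        (Ioo x₀ ℓ) volume ∧
      2 * (∫ x in Ioo x₀ ℓ, g' x * ((x - x₀ : ℝ) : ℂ) * (starRingEnd ℂ) (u' x)).re =
        (ℓ - x₀) ^ (1 + μ) * ‖u' ℓ‖ ^ 2 -
          (1 - μ) * ∫ x in Ioo x₀ ℓ, (x - x₀) ^ μ * ‖u' x‖ ^ 2 :=
  multiplier_identity_general μ x₀ ℓ hμ2 hxl u u' g' hu
end

section
/- Let γ > 0, 0 ≤ μ_a < 1, 1 ≤ μ_b < 2, a(x) = x^{μ_a} on [0,1], b(x) = (1+x)^{μ_b} on [−1,0]. Suppose u ∈ V²_a(0,1) and w ∈ V²_b(−1,0) satisfy (a u')' = 0 a.e. on (0,1), (b w')' = 0 a.e. on (−1,0), u(0) = w(0), lim_{x→0⁺}(a u')(x) = (b w')(0), and γ u(1) + u'(1) = 0. Then u ≡ 0 and w ≡ 0. -/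
/-! The equations `(a u')' = 0`, `(b w')' = 0` make both fluxes `a u'` and `b w'` constant. A
nonzero constant flux `c = b w'` would give `|√b w'|² = |c|² (1 + x)^(-μ_b)`, which is not
integrable at `-1` when `μ_b ≥ 1`; hence `b w' ≡ 0`. The transmission condition passes this to
`a u'`, so `u` and `w` are constant, the Robin condition at `1` gives `u(1) = 0`, and continuity at
`0` gives `w(0) = u(0⁺) = 0`. -/

open MeasureTheory Set Filter Topology

lemma intervalIntegral_eq_zero_of_ae_restrict_Ioo {E : Type*} [NormedAddCommGroup E]
    [NormedSpace ℝ E] {l r x y : ℝ} {f : ℝ → E} (hf : f =ᵐ[volume.restrict (Ioo l r)] 0)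
    (hx : l < x) (hxy : x ≤ y) (hy : y ≤ r) : ∫ t in x..y, f t = 0 := by
  rw [intervalIntegral.integral_of_le hxy, integral_Ioc_eq_integral_Ioo]
  exact integral_eq_zero_of_ae <|
    ae_restrict_of_ae_restrict_of_subset (Ioo_subset_Ioo hx.le hy) hf

lemma not_integrableOn_one_add_rpow {s : ℝ} (hs : s ≤ -1) :
    ¬ IntegrableOn (fun x : ℝ => (1 + x) ^ s) (Ioo (-1) 0) := by
  have hshift := IntervalIntegrable.comp_add_left_iff (f := fun x : ℝ => x ^ s)
    (a := 0) (b := 1) (c := 1)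
  norm_num only at hshift
  rw [← intervalIntegrable_iff_integrableOn_Ioo_of_le (by norm_num), hshift,
    intervalIntegrable_iff_integrableOn_Ioo_of_le zero_le_one,
    intervalIntegral.integrableOn_Ioo_rpow_iff one_pos]
  linarith

lemma eq_of_tendsto_nhdsGT_of_eqOn_Ioc {X : Type*} [TopologicalSpace X] [T2Space X]
    {f : ℝ → X} {a b : ℝ} {y z : X} (h : Tendsto f (𝓝[>] a) (𝓝 y)) (hab : a < b)
    (hf : ∀ x ∈ Ioc a b, f x = z) : y = z :=
  tendsto_nhds_unique h <| tendsto_const_nhds.congr' <| by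
    filter_upwards [Ioo_mem_nhdsGT hab] with x hx using (hf x (Ioo_subset_Ioc_self hx)).symm

section Flux

variable {x₀ ℓ : ℝ} {α : ℝ → ℝ} {u u' g' : ℝ → ℂ}

theorem MemV1C.eq_of_deriv_eq_zero (hu : MemV1C x₀ ℓ α u u')
    (hu' : ∀ x ∈ Ioc x₀ ℓ, u' x = 0) : ∀ x ∈ Ioc x₀ ℓ, u x = u ℓ := by
  intro x hx
  have hftc := (hu.2.1 x ℓ hx.1 hx.2 le_rfl).2
  rw [intervalIntegral.integral_of_le hx.2, setIntegral_eq_zero_of_forall_eq_zero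
    fun t ht => hu' t ⟨hx.1.trans ht.1, ht.2⟩] at hftc
  exact (sub_eq_zero.mp hftc).symm

theorem MemV2C.smul_deriv_eq_of_ae_eq_zero (hu : MemV2C x₀ ℓ α u u' g')
    (hg : g' =ᵐ[volume.restrict (Ioo x₀ ℓ)] 0) :
    ∀ x ∈ Ioc x₀ ℓ, α x • u' x = α ℓ • u' ℓ := by
  intro x hx
  have hftc := (hu.2.2.2 x ℓ hx.1 hx.2 le_rfl).2
  rw [intervalIntegral_eq_zero_of_ae_restrict_Ioo hg hx.1 hx.2 le_rfl] at hftc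
  exact (sub_eq_zero.mp hftc).symm

theorem MemV2C.eq_of_ae_eq_zero_of_deriv_right_eq_zero (hu : MemV2C x₀ ℓ α u u' g')
    (hα : ∀ x ∈ Ioc x₀ ℓ, α x ≠ 0) (hg : g' =ᵐ[volume.restrict (Ioo x₀ ℓ)] 0)
    (hℓ : u' ℓ = 0) : ∀ x ∈ Ioc x₀ ℓ, u x = u ℓ :=
  hu.1.eq_of_deriv_eq_zero fun x hx => by
    have hflux : α x • u' x = 0 := by
      rw [hu.smul_deriv_eq_of_ae_eq_zero hg x hx, hℓ, smul_zero]
    exact (smul_eq_zero.mp hflux).resolve_left (hα x hx)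

end Flux

lemma eq_zero_of_memLp_sqrt_smul {μ : ℝ} (hμ : 1 ≤ μ) {w' : ℝ → ℂ} {c : ℂ}
    (hL2 : MemLp (fun x => Real.sqrt ((1 + x) ^ μ) • w' x) 2
      (volume.restrict (Ioo (-1 : ℝ) 0)))
    (hflux : ∀ x ∈ Ioo (-1 : ℝ) 0, ((1 + x) ^ μ : ℝ) • w' x = c) : c = 0 := by
  by_contra hc
  have hnorm : ∀ x ∈ Ioo (-1 : ℝ) 0,
      ‖Real.sqrt ((1 + x) ^ μ) • w' x‖ ^ 2 = ‖c‖ ^ 2 * (1 + x) ^ (-μ) := by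
    intro x hx
    have hx0 : 0 < 1 + x := by linarith [hx.1]
    have hpos : 0 < (1 + x) ^ μ := Real.rpow_pos_of_pos hx0 μ
    rw [← hflux x hx, norm_smul, norm_smul, mul_pow, mul_pow,
      Real.norm_of_nonneg (Real.sqrt_nonneg _), Real.sq_sqrt hpos.le,
      Real.norm_of_nonneg hpos.le, Real.rpow_neg hx0.le]
    field_simp
  have hint : IntegrableOn (fun x : ℝ => ‖c‖ ^ 2 * (1 + x) ^ (-μ)) (Ioo (-1) 0) :=
    (hL2.integrable_norm_pow two_ne_zero).congr <|
      ae_restrict_of_forall_mem measurableSet_Ioo hnorm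
  rw [IntegrableOn, integrable_const_mul_iff (by simpa using hc)] at hint
  exact not_integrableOn_one_add_rpow (by linarith) hint

theorem kernel_trivial_strong_general (γ μa μb : ℝ) (hγ : 0 < γ)
    (hμb1 : 1 ≤ μb)
    (u u' gu w w' gw : ℝ → ℂ)
    (hu : MemV2C 0 1 (fun x => x ^ μa) u u' gu)
    (hw : MemV2C (-1) 0 (fun x => (1 + x) ^ μb) w w' gw)
    (hgu : gu =ᵐ[volume.restrict (Ioo (0 : ℝ) 1)] 0)
    (hgw : gw =ᵐ[volume.restrict (Ioo (-1 : ℝ) 0)] 0)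
    (huw : Tendsto u (𝓝[>] (0 : ℝ)) (𝓝 (w 0)))
    (htrans : Tendsto (fun x : ℝ => (x ^ μa : ℝ) • u' x) (𝓝[>] (0 : ℝ))
      (𝓝 ((((1 : ℝ) + 0) ^ μb : ℝ) • w' 0)))
    (hbc : (γ : ℂ) * u 1 + u' 1 = 0) :
    (∀ x ∈ Ioc (0 : ℝ) 1, u x = 0) ∧ (∀ x ∈ Ioc (-1 : ℝ) 0, w x = 0) := by
  have hflux_u := hu.smul_deriv_eq_of_ae_eq_zero hgu
  have hflux_w := hw.smul_deriv_eq_of_ae_eq_zero hgw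
  simp only [Real.one_rpow, one_smul, add_zero] at hflux_u hflux_w htrans
  have hw'0 : w' 0 = 0 :=
    eq_zero_of_memLp_sqrt_smul hμb1 hw.1.2.2 fun x hx => hflux_w x (Ioo_subset_Ioc_self hx)
  have hu'1 : u' 1 = 0 :=
    hw'0 ▸ (eq_of_tendsto_nhdsGT_of_eqOn_Ioc htrans one_pos hflux_u).symm
  have hu1 : u 1 = 0 := by simpa [hu'1, hγ.ne'] using hbc
  have hu0 : ∀ x ∈ Ioc (0 : ℝ) 1, u x = 0 := fun x hx =>
    (hu.eq_of_ae_eq_zero_of_deriv_right_eq_zero (fun y hy => (Real.rpow_pos_of_pos hy.1 _).ne')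
      hgu hu'1 x hx).trans hu1
  have hw0 : w 0 = 0 := eq_of_tendsto_nhdsGT_of_eqOn_Ioc huw one_pos hu0
  refine ⟨hu0, fun x hx => ?_⟩
  rw [← hw0]
  exact hw.eq_of_ae_eq_zero_of_deriv_right_eq_zero
    (fun y hy => (Real.rpow_pos_of_pos (by linarith [hy.1]) _).ne') hgw hw'0 x hx

/-- Kernel of the operator (strongly degenerate left string, `1 ≤ μ_b < 2`):
if `u ∈ V²_a(0,1)`, `w ∈ V²_b(-1,0)` satisfy `(a u')' = 0` and `(b w')' = 0` a.e.,
`u(0) = w(0)`, `lim_{x→0⁺}(a u')(x) = (b w')(0)` and `γ u(1) + u'(1) = 0`,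
then `u ≡ 0` and `w ≡ 0`. -/
theorem kernel_trivial_strong (γ μa μb : ℝ) (hγ : 0 < γ)
    (hμa0 : 0 ≤ μa) (hμa1 : μa < 1) (hμb1 : 1 ≤ μb) (hμb2 : μb < 2)
    (u u' gu w w' gw : ℝ → ℂ)
    (hu : MemV2C 0 1 (fun x => x ^ μa) u u' gu)
    (hw : MemV2C (-1) 0 (fun x => (1 + x) ^ μb) w w' gw)
    (hgu : gu =ᵐ[volume.restrict (Ioo (0 : ℝ) 1)] 0)
    (hgw : gw =ᵐ[volume.restrict (Ioo (-1 : ℝ) 0)] 0)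
    (huw : Tendsto u (𝓝[>] (0 : ℝ)) (𝓝 (w 0)))
    (htrans : Tendsto (fun x : ℝ => (x ^ μa : ℝ) • u' x) (𝓝[>] (0 : ℝ))
      (𝓝 ((((1 : ℝ) + 0) ^ μb : ℝ) • w' 0)))
    (hbc : (γ : ℂ) * u 1 + u' 1 = 0) :
    (∀ x ∈ Ioc (0 : ℝ) 1, u x = 0) ∧ (∀ x ∈ Ioc (-1 : ℝ) 0, w x = 0) :=
  kernel_trivial_strong_general γ μa μb hγ hμb1 u u' gu w w' gw hu hw hgu hgw huw htrans hbc
end
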